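/- arXiv:1502.04725 — 3 statements merged into one kernel-verified Lean document; each statement's English description precedes it below -/
import Mathlib

section
/- (Long-lasting riots from strong shocks.) Consider λ' = -ωλ + r(α)G(λ), α' = -h(λ)α with λ(0)=λ₀ > 0, α(0)=A, where G(z)=z(z₀-z), r is increasing with r(z)→1 as z→∞, h is bounded above by θ, and z₀·r(0) < ω < z₀. Let λ* = z₀ - ω be the positive equilibrium of y' = -ωy + G(y). Then for every δ > 0 and L > 0 there exist t₀ ≥ 0 and A₀ > 0 such that whenever A ≥ A₀, the solution satisfies λ(t) > λ* - δ for all t ∈ [t₀, t₀ + L]. -/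
open Real Filter Set

noncomputable def rfun (β a z : ℝ) : ℝ := 1 / (1 + Real.exp (-β * (z - a)))

noncomputable def hfun (θ p z : ℝ) : ℝ := θ / (1 + z) ^ p

noncomputable def Gfun (z₀ z : ℝ) : ℝ := z * (z₀ - z)

/-! A strong shock keeps `α` large for a long time: since `h ≤ θ`, `α t ≥ A e^{-θ t}`, so on a
fixed window `[0, T]` one has `r(α) ≥ 1 - η` as soon as `A ≥ M e^{θ T}`. There `λ'/λ` stays above
a fixed rate `κ > 0` while `λ ≤ λ* - ε`, so `λ` grows at least like `λ₀ e^{κ t}` until it reaches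
`λ* - ε`, at a time `t₀` that depends neither on `A` nor on the solution, and it cannot fall back
below that level before `T = t₀ + L`. All comparisons are instances of the fencing theorem
`image_le_of_deriv_right_lt_deriv_boundary'`. -/

open Topology

theorem le_of_hasDerivAt_of_lt_at_touch {f g f' g' : ℝ → ℝ} {a b : ℝ}
    (hg : ∀ t, HasDerivAt g (g' t) t) (hf : ∀ t ∈ Icc a b, HasDerivAt f (f' t) t)
    (ha : g a ≤ f a) (htouch : ∀ t ∈ Ico a b, g t = f t → g' t < f' t) :
    ∀ t ∈ Icc a b, g t ≤ f t := fun _ ht =>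
  image_le_of_deriv_right_lt_deriv_boundary' (fun t _ => (hg t).continuousAt.continuousWithinAt)
    (fun t _ => (hg t).hasDerivWithinAt) ha (fun t ht => (hf t ht).continuousAt.continuousWithinAt)
    (fun t ht => (hf t (Ico_subset_Icc_self ht)).hasDerivWithinAt) htouch ht

theorem hasDerivAt_mul_exp_mul (x κ t : ℝ) :
    HasDerivAt (fun s => x * exp (κ * s)) (κ * (x * exp (κ * t))) t :=
  (((hasDerivAt_id' t).const_mul κ).exp.const_mul x).congr_deriv (by ring)

theorem pos_of_hasDerivAt_eq_mul_self {f φ : ℝ → ℝ} {T : ℝ} (hφ : ContinuousOn φ (Icc 0 T))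
    (hf : ∀ t ∈ Icc 0 T, HasDerivAt f (φ t * f t) t) (h0 : 0 < f 0) :
    ∀ t ∈ Icc 0 T, 0 < f t := by
  obtain ⟨c, hc⟩ := isCompact_Icc.bddBelow_image hφ
  have hfence := le_of_hasDerivAt_of_lt_at_touch (hasDerivAt_mul_exp_mul (f 0) (c - 1)) hf
    (by simp) fun t ht htouch => by
      have hct : c ≤ φ t := hc ⟨t, Ico_subset_Icc_self ht, rfl⟩
      have hft : 0 < f t := htouch ▸ by positivity
      rw [htouch]
      nlinarith
  exact fun t ht => (by positivity : 0 < f 0 * exp ((c - 1) * t)).trans_le (hfence t ht)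

theorem exists_mul_exp_eq_max {x κ : ℝ} (hx : 0 < x) (hκ : 0 < κ) (m : ℝ) :
    ∃ t₀ ≥ 0, x * exp (κ * t₀) = max x m := by
  have hratio : 1 ≤ max x m / x := (one_le_div hx).2 (le_max_left x m)
  refine ⟨log (max x m / x) / κ, div_nonneg (log_nonneg hratio) hκ.le, ?_⟩
  rw [mul_div_cancel₀ _ hκ.ne', exp_log (by linarith)]
  field_simp

theorem le_of_hasDerivAt_of_growth_below {f f' : ℝ → ℝ} {m κ t₀ T : ℝ} (hκ : 0 < κ) (hm : 0 < m)
    (hf : ∀ t ∈ Icc 0 T, HasDerivAt f (f' t) t) (h0 : 0 < f 0)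
    (ht₀0 : 0 ≤ t₀) (ht₀ : f 0 * exp (κ * t₀) = max (f 0) m)
    (hgrow : ∀ t ∈ Icc 0 T, 0 < f t → f t ≤ m → κ * f t < f' t) :
    ∀ t ∈ Icc t₀ T, m ≤ f t := by
  intro t ht
  have hT : t₀ ≤ T := ht.1.trans ht.2
  have hexp : ∀ s ∈ Icc 0 t₀, f 0 * exp (κ * s) ≤ f s :=
    le_of_hasDerivAt_of_lt_at_touch (hasDerivAt_mul_exp_mul (f 0) κ)
      (fun s hs => hf s ⟨hs.1, hs.2.trans hT⟩) (by simp) fun s hs htouch => by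
        have hbelow : f 0 * exp (κ * s) < max (f 0) m := ht₀ ▸ by gcongr; exact hs.2
        have hstart : f 0 ≤ f 0 * exp (κ * s) :=
          le_mul_of_one_le_right h0.le (one_le_exp_iff.2 (by nlinarith [hs.1]))
        have hlt : f 0 * exp (κ * s) < m := by
          rcases lt_max_iff.1 hbelow with h | h
          · linarith
          · exact h
        rw [htouch] at hlt ⊢
        exact hgrow s ⟨hs.1, hs.2.le.trans hT⟩ (htouch ▸ by positivity) hlt.le
  refine le_of_hasDerivAt_of_lt_at_touch (fun _ => hasDerivAt_const _ m)
    (fun s hs => hf s ⟨ht₀0.trans hs.1, hs.2⟩) ?_ (fun s hs htouch => ?_) t ht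
  · exact (le_max_right _ _).trans (ht₀ ▸ hexp t₀ ⟨ht₀0, le_rfl⟩)
  · have hs' : s ∈ Icc 0 T := ⟨ht₀0.trans hs.1, hs.2.le⟩
    have := hgrow s hs' (htouch ▸ hm) htouch.ge
    nlinarith

theorem continuous_rfun (β a : ℝ) : Continuous (rfun β a) :=
  continuous_const.div (by fun_prop) fun _ => by positivity

theorem tendsto_rfun_atTop {β : ℝ} (hβ : 0 < β) (a : ℝ) : Tendsto (rfun β a) atTop (𝓝 1) := by
  have hexp : Tendsto (fun z => exp (-β * (z - a))) atTop (𝓝 0) :=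
    tendsto_exp_atBot.comp <|
      (tendsto_atTop_add_const_right _ (-a) tendsto_id).const_mul_atTop_of_neg (by linarith)
  have hr : rfun β a = fun z => (1 + exp (-β * (z - a)))⁻¹ := funext fun _ => one_div _
  simpa [hr] using (hexp.const_add 1).inv₀ (by norm_num)

theorem hfun_lt {θ p z : ℝ} (hθ : 0 < θ) (hp : 0 < p) (hz : 0 < z) : hfun θ p z < θ :=
  div_lt_self hθ (one_lt_rpow (by linarith) hp)

/-- The choice `η = ε / (2 (ω + ε))` makes `(1 - η) (ω + ε) - ω = ε / 2`. -/
theorem mul_lt_drift_of_le_sub {ω z₀ ε r y : ℝ} (hω : 0 < ω) (hε : 0 < ε)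
    (hr : 1 - ε / (2 * (ω + ε)) ≤ r) (hy : 0 < y) (hyle : y ≤ z₀ - ω - ε) :
    ε / 4 * y < -ω * y + r * Gfun z₀ y := by
  have hη : ε / (2 * (ω + ε)) * (ω + ε) = ε / 2 := by field_simp
  have hη1 : ε / (2 * (ω + ε)) < 1 := by rw [div_lt_one (by positivity)]; linarith
  have hrate : (1 - ε / (2 * (ω + ε))) * (ω + ε) ≤ r * (z₀ - y) :=
    mul_le_mul hr (by linarith) (by positivity) (by linarith)
  have : ε / 4 < -ω + r * (z₀ - y) := by nlinarith
  unfold Gfun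
  nlinarith

theorem riot_solution_bounds {ω z₀ β a θ p T : ℝ} {lam alp : ℝ → ℝ} (hθ : 0 < θ) (hp : 0 < p)
    (hlam0 : 0 < lam 0) (halp0 : 0 < alp 0)
    (hlamD : ∀ t ∈ Icc 0 T, HasDerivAt lam (-ω * lam t + rfun β a (alp t) * Gfun z₀ (lam t)) t)
    (halpD : ∀ t ∈ Icc 0 T, HasDerivAt alp (-(hfun θ p (lam t)) * alp t) t) :
    ∀ t ∈ Icc 0 T, 0 < lam t ∧ alp 0 * exp (-θ * t) ≤ alp t := by
  have hlamC : ContinuousOn lam (Icc 0 T) := fun t ht =>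
    (hlamD t ht).continuousAt.continuousWithinAt
  have halpC : ContinuousOn alp (Icc 0 T) := fun t ht =>
    (halpD t ht).continuousAt.continuousWithinAt
  have hpos : ∀ t ∈ Icc 0 T, 0 < lam t :=
    pos_of_hasDerivAt_eq_mul_self (φ := fun t => -ω + rfun β a (alp t) * (z₀ - lam t))
      (by have := (continuous_rfun β a).comp_continuousOn halpC; fun_prop)
      (fun t ht => (hlamD t ht).congr_deriv (by unfold Gfun; ring)) hlam0
  refine fun t ht => ⟨hpos t ht, le_of_hasDerivAt_of_lt_at_touch
    (hasDerivAt_mul_exp_mul (alp 0) (-θ)) halpD (by simp) (fun s hs htouch => ?_) t ht⟩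
  have hs : s ∈ Icc 0 T := Ico_subset_Icc_self hs
  have halp : 0 < alp s := htouch ▸ by positivity
  rw [htouch]
  nlinarith [hfun_lt hθ hp (hpos s hs)]

theorem riot_long_lasting_from_strong_shock_general
    (ω z₀ β a θ p lam₀ : ℝ)
    (hω : 0 < ω) (hβ : 0 < β)
    (hθ : 0 < θ) (hp : 0 < p)
    (hhigh : ω < z₀)
    (hlam₀ : 0 < lam₀) :
    ∀ δ > (0:ℝ), ∀ L > (0:ℝ), ∃ t₀ ≥ (0:ℝ), ∃ A₀ > (0:ℝ), ∀ A ≥ A₀,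
      ∀ lam alp : ℝ → ℝ,
        lam 0 = lam₀ → alp 0 = A →
        (∀ t, 0 ≤ t →
          HasDerivAt lam (-ω * lam t + rfun β a (alp t) * Gfun z₀ (lam t)) t) →
        (∀ t, 0 ≤ t →
          HasDerivAt alp (-(hfun θ p (lam t)) * alp t) t) →
        ∀ t ∈ Set.Icc t₀ (t₀ + L), lam t > (z₀ - ω) - δ := by
  intro δ hδ L hL
  set ε := min δ (z₀ - ω) / 2 with hε_def
  have hε : 0 < ε := half_pos (lt_min hδ (sub_pos.2 hhigh))
  have hεδ : ε < δ := (half_lt_self (lt_min hδ (sub_pos.2 hhigh))).trans_le (min_le_left _ _)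
  have hm : 0 < z₀ - ω - ε := by linarith [min_le_right δ (z₀ - ω)]
  obtain ⟨M, hM⟩ : ∃ M, ∀ z ≥ M, 1 - ε / (2 * (ω + ε)) < rfun β a z := eventually_atTop.1 <|
    (tendsto_order.1 (tendsto_rfun_atTop hβ a)).1 _ (sub_lt_self 1 (by positivity))
  obtain ⟨t₀, ht₀0, ht₀⟩ := exists_mul_exp_eq_max hlam₀ (by positivity : 0 < ε / 4) (z₀ - ω - ε)
  refine ⟨t₀, ht₀0, max 1 (M * exp (θ * (t₀ + L))), lt_max_of_lt_left one_pos,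
    fun A hA₀ lam alp hlam0 halp0 hlamD halpD t ht => ?_⟩
  have hA : 0 < A := one_pos.trans_le ((le_max_left _ _).trans hA₀)
  have hbounds := riot_solution_bounds (T := t₀ + L) hθ hp (hlam0 ▸ hlam₀) (halp0 ▸ hA)
    (fun s hs => hlamD s hs.1) (fun s hs => halpD s hs.1)
  have hr : ∀ s ∈ Icc 0 (t₀ + L), 1 - ε / (2 * (ω + ε)) ≤ rfun β a (alp s) := by
    intro s hs
    refine (hM _ ?_).le
    calc M ≤ A * exp (-θ * (t₀ + L)) := by
          rw [neg_mul, exp_neg, ← div_eq_mul_inv, le_div_iff₀ (exp_pos _)]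
          exact (le_max_right _ _).trans hA₀
      _ ≤ A * exp (-θ * s) := by gcongr A * exp ?_; nlinarith [hs.2]
      _ ≤ alp s := halp0 ▸ (hbounds s hs).2
  have hgrowth := le_of_hasDerivAt_of_growth_below (by positivity) hm
    (fun s hs => hlamD s hs.1) (hlam0 ▸ hlam₀) ht₀0 (hlam0 ▸ ht₀)
    (fun s hs hpos hle => mul_lt_drift_of_le_sub hω hε (hr s hs) hpos hle) t ht
  linarith

/-- long-lasting riots from strong shocks.  For every `δ > 0` and `L > 0`
there are `t₀ ≥ 0` and `A₀ > 0` such that any solution issued from a shock of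
amplitude `A ≥ A₀` stays above `λ* - δ` on `[t₀, t₀ + L]`, where `λ* = z₀ - ω`. -/
theorem riot_long_lasting_from_strong_shock
    (ω z₀ β a θ p lam₀ : ℝ)
    (hω : 0 < ω) (hz₀ : 0 < z₀) (hβ : 0 < β) (ha : 0 < a)
    (hθ : 0 < θ) (hp : 0 < p) (hp1 : p ≤ 1)
    (hlow : z₀ * rfun β a 0 < ω) (hhigh : ω < z₀)
    (hlam₀ : 0 < lam₀) :
    ∀ δ > (0:ℝ), ∀ L > (0:ℝ), ∃ t₀ ≥ (0:ℝ), ∃ A₀ > (0:ℝ), ∀ A ≥ A₀,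
      ∀ lam alp : ℝ → ℝ,
        lam 0 = lam₀ → alp 0 = A →
        (∀ t, 0 ≤ t →
          HasDerivAt lam (-ω * lam t + rfun β a (alp t) * Gfun z₀ (lam t)) t) →
        (∀ t, 0 ≤ t →
          HasDerivAt alp (-(hfun θ p (lam t)) * alp t) t) →
        ∀ t ∈ Set.Icc t₀ (t₀ + L), lam t > (z₀ - ω) - δ :=
  riot_long_lasting_from_strong_shock_general ω z₀ β a θ p lam₀ hω hβ hθ hp hhigh hlam₀
end

section
/- (Monotone decrease of tension forces a single activity peak after crossing the nullcline.) Consider λ' = -ωλ + r(α)λ(z₀-λ), α' = -h(λ)α with λ(0) ∈ (0, z₀), α(0) > α_c, under the standing assumptions z₀ r(0) < ω < z₀, r strictly increasing, h > 0. Then α(t) is strictly decreasing for all t, and there exists a unique time t̂ ≥ 0 such that λ is nondecreasing on [0, t̂] and nonincreasing on [t̂, ∞) — namely the trajectory crosses the nullcline r(α)(z₀-λ)=ω exactly once from below. -/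
/-!
Write the equation for `λ` as `λ' = g λ` with per-capita rate `g = r(α)(z₀ - λ) - ω`. Linear
comparison keeps `α > 0` and `0 < λ < z₀`, so `α` is strictly decreasing and so is `r ∘ α`.
Once `g ≤ 0` it stays so: at the last time `s` before `t` with `g(s) ≤ 0`, `λ` increases on
`[s, t]`, hence `g(t) < g(s)` whenever `r(α(t)) > 0`. If `g` stayed positive forever, `λ` would
increase, `h(λ)` would be bounded below, `α` would decay to `0`, and `z₀ r(0) < ω` would force
`g < 0`. So `λ` increases up to the first time `t̂` with `g(t̂) ≤ 0` and decreases afterwards.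
The peak time is unique because `λ` has no plateau: `λ' = 0` on an interval would pin
`r(α) = ω / (z₀ - λ)` there, contradicting strict monotonicity.
-/

open Real Filter Set Topology

theorem monotoneOn_mul_exp_of_hasDerivAt {f f' : ℝ → ℝ} {s : Set ℝ} (M : ℝ) (hs : Convex ℝ s)
    (hf : ∀ t ∈ s, HasDerivAt f (f' t) t) (hM : ∀ t ∈ interior s, 0 ≤ f' t + M * f t) :
    MonotoneOn (fun t => f t * exp (M * t)) s := by
  have hd : ∀ t ∈ s,
      HasDerivAt (fun t => f t * exp (M * t)) ((f' t + M * f t) * exp (M * t)) t := by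
    intro t ht
    exact ((hf t ht).mul ((hasDerivAt_id' t).const_mul M).exp).congr_deriv (by ring)
  exact monotoneOn_of_hasDerivWithinAt_nonneg hs
    (fun t ht => (hd t ht).continuousAt.continuousWithinAt)
    (fun t ht => (hd t (interior_subset ht)).hasDerivWithinAt)
    (fun t ht => mul_nonneg (hM t ht) (exp_pos _).le)

theorem exists_first_nonpos {f : ℝ → ℝ} {a b : ℝ} (hf : ContinuousOn f (Icc a b)) (hab : a ≤ b)
    (hb : f b ≤ 0) : ∃ c ∈ Icc a b, f c ≤ 0 ∧ ∀ t ∈ Ico a c, 0 < f t := by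
  set S := Icc a b ∩ f ⁻¹' Iic 0
  have hbdd : BddBelow S := ⟨a, fun x hx => hx.1.1⟩
  obtain ⟨hmem, hle⟩ : sInf S ∈ S :=
    (hf.preimage_isClosed_of_isClosed isClosed_Icc isClosed_Iic).csInf_mem
      ⟨b, right_mem_Icc.2 hab, hb⟩ hbdd
  refine ⟨sInf S, hmem, hle, fun t ht => ?_⟩
  by_contra! hft
  exact (csInf_le hbdd ⟨⟨ht.1, ht.2.le.trans hmem.2⟩, hft⟩).not_gt ht.2

theorem exists_last_nonpos {f : ℝ → ℝ} {a b : ℝ} (hf : ContinuousOn f (Icc a b)) (hab : a ≤ b)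
    (ha : f a ≤ 0) : ∃ c ∈ Icc a b, f c ≤ 0 ∧ ∀ t ∈ Ioc c b, 0 < f t := by
  set S := Icc a b ∩ f ⁻¹' Iic 0
  have hbdd : BddAbove S := ⟨b, fun x hx => hx.1.2⟩
  obtain ⟨hmem, hle⟩ : sSup S ∈ S :=
    (hf.preimage_isClosed_of_isClosed isClosed_Icc isClosed_Iic).csSup_mem
      ⟨a, left_mem_Icc.2 hab, ha⟩ hbdd
  refine ⟨sSup S, hmem, hle, fun t ht => ?_⟩
  by_contra! hft
  exact (le_csSup hbdd ⟨⟨hmem.1.trans ht.1.le, ht.2⟩, hft⟩).not_gt ht.1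

theorem pos_of_hasDerivAt_mul_add {f c b : ℝ → ℝ} {a : ℝ} (hc : ContinuousOn c (Ici a))
    (hb : ∀ t, a ≤ t → 0 ≤ b t) (ha : 0 < f a)
    (hf : ∀ t, a ≤ t → HasDerivAt f (c t * f t + b t) t) {t : ℝ} (ht : a ≤ t) : 0 < f t := by
  by_contra! hft
  obtain ⟨t₀, ht₀, hft₀, hpos⟩ := exists_first_nonpos
    (fun s hs => (hf s hs.1).continuousAt.continuousWithinAt) ht hft
  obtain ⟨M, hM⟩ := isCompact_Icc.exists_bound_of_continuousOn
    (hc.mono (Icc_subset_Ici_self : Icc a t₀ ⊆ Ici a))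
  have hmono := monotoneOn_mul_exp_of_hasDerivAt M (convex_Icc a t₀) (fun s hs => hf s hs.1) <| by
    intro s hs
    rw [interior_Icc] at hs
    have hcM := neg_le_of_abs_le (hM s (Ioo_subset_Icc_self hs))
    have := hpos s ⟨hs.1.le, hs.2⟩
    have := hb s hs.1.le
    nlinarith
  have := hmono (left_mem_Icc.2 ht₀.1) (right_mem_Icc.2 ht₀.1) ht₀.1
  nlinarith [mul_pos ha (exp_pos (M * a)), exp_pos (M * t₀)]

theorem tendsto_zero_of_hasDerivAt_neg_mul {f k : ℝ → ℝ} {m : ℝ} (hm : 0 < m)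
    (hk : ∀ t, 0 ≤ t → m ≤ k t) (hf : ∀ t, 0 ≤ t → HasDerivAt f (-k t * f t) t)
    (hpos : ∀ t, 0 ≤ t → 0 < f t) : Tendsto f atTop (𝓝 0) := by
  have hmono := monotoneOn_mul_exp_of_hasDerivAt (f := fun t => -f t) m (convex_Ici 0)
      (fun t ht => (hf t ht).neg) <| by
    intro t ht
    rw [interior_Ici] at ht
    nlinarith [hk t ht.le, hpos t ht.le]
  have hbound : ∀ t, 0 ≤ t → f t ≤ f 0 * exp (-(m * t)) := by
    intro t ht
    have := hmono self_mem_Ici ht ht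
    simp only [mul_zero, exp_zero, mul_one] at this
    rw [exp_neg, ← div_eq_mul_inv, le_div_iff₀ (exp_pos _)]
    linarith
  have hdecay : Tendsto (fun t => f 0 * exp (-(m * t))) atTop (𝓝 0) := by
    simpa using (tendsto_exp_neg_atTop_nhds_zero.comp
      (tendsto_id.const_mul_atTop hm)).const_mul (f 0)
  exact tendsto_of_tendsto_of_tendsto_of_le_of_le' tendsto_const_nhds hdecay
    (eventually_ge_atTop 0 |>.mono fun t ht => (hpos t ht).le)
    (eventually_ge_atTop 0 |>.mono hbound)

section PerCapitaRate

/-! Here `q` stands for `r ∘ α`, so that `λ' = (q (z₀ - λ) - ω) λ`. -/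

variable {ω z₀ : ℝ} {q lam : ℝ → ℝ}

theorem mem_Ioo_of_hasDerivAt_rate (hω : 0 ≤ ω) (hqc : ContinuousOn q (Ici 0))
    (hlam : ∀ t, 0 ≤ t → HasDerivAt lam ((q t * (z₀ - lam t) - ω) * lam t) t)
    (h0 : lam 0 ∈ Ioo 0 z₀) {t : ℝ} (ht : 0 ≤ t) : lam t ∈ Ioo 0 z₀ := by
  have hlamc : ContinuousOn lam (Ici 0) := fun s hs => (hlam s hs).continuousAt.continuousWithinAt
  have hpos : ∀ t, 0 ≤ t → 0 < lam t := fun t ht =>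
    pos_of_hasDerivAt_mul_add (b := 0)
      ((hqc.mul (continuousOn_const.sub hlamc)).sub continuousOn_const)
      (fun _ _ => le_rfl) h0.1 (fun t ht => by simpa using hlam t ht) ht
  refine ⟨hpos t ht, sub_pos.1 ?_⟩
  refine pos_of_hasDerivAt_mul_add (f := fun t => z₀ - lam t) (c := fun t => -(q t * lam t))
    (b := fun t => ω * lam t) (hqc.mul hlamc).neg (fun t ht => mul_nonneg hω (hpos t ht).le)
    (sub_pos.2 h0.2) (fun t ht => ((hlam t ht).const_sub z₀).congr_deriv (by ring)) ht

theorem continuousOn_rate (hqc : ContinuousOn q (Ici 0))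
    (hlam : ∀ t, 0 ≤ t → HasDerivAt lam ((q t * (z₀ - lam t) - ω) * lam t) t) :
    ContinuousOn (fun t => q t * (z₀ - lam t) - ω) (Ici 0) :=
  (hqc.mul (continuousOn_const.sub fun t ht => (hlam t ht).continuousAt.continuousWithinAt)).sub
    continuousOn_const

theorem monotoneOn_of_rate_nonneg
    (hlam : ∀ t, 0 ≤ t → HasDerivAt lam ((q t * (z₀ - lam t) - ω) * lam t) t)
    (hpos : ∀ t, 0 ≤ t → 0 < lam t) {S : Set ℝ} (hS : Convex ℝ S) (hS0 : S ⊆ Ici 0)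
    (hg : ∀ t ∈ interior S, 0 ≤ q t * (z₀ - lam t) - ω) : MonotoneOn lam S :=
  monotoneOn_of_hasDerivWithinAt_nonneg hS
    (fun t ht => (hlam t (hS0 ht)).continuousAt.continuousWithinAt)
    (fun t ht => (hlam t (hS0 (interior_subset ht))).hasDerivWithinAt)
    (fun t ht => mul_nonneg (hg t ht) (hpos t (hS0 (interior_subset ht))).le)

theorem antitoneOn_of_rate_nonpos
    (hlam : ∀ t, 0 ≤ t → HasDerivAt lam ((q t * (z₀ - lam t) - ω) * lam t) t)
    (hpos : ∀ t, 0 ≤ t → 0 < lam t) {S : Set ℝ} (hS : Convex ℝ S) (hS0 : S ⊆ Ici 0)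
    (hg : ∀ t ∈ interior S, q t * (z₀ - lam t) - ω ≤ 0) : AntitoneOn lam S :=
  antitoneOn_of_hasDerivWithinAt_nonpos hS
    (fun t ht => (hlam t (hS0 ht)).continuousAt.continuousWithinAt)
    (fun t ht => (hlam t (hS0 (interior_subset ht))).hasDerivWithinAt)
    (fun t ht => mul_nonpos_of_nonpos_of_nonneg (hg t ht) (hpos t (hS0 (interior_subset ht))).le)

theorem rate_nonpos_of_le (hω : 0 ≤ ω) (hq : StrictAntiOn q (Ici 0)) (hqc : ContinuousOn q (Ici 0))
    (hlam : ∀ t, 0 ≤ t → HasDerivAt lam ((q t * (z₀ - lam t) - ω) * lam t) t)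
    (hpos : ∀ t, 0 ≤ t → 0 < lam t) (hlt : ∀ t, 0 ≤ t → lam t < z₀) {s t : ℝ} (hs : 0 ≤ s)
    (hst : s ≤ t) (hgs : q s * (z₀ - lam s) - ω ≤ 0) : q t * (z₀ - lam t) - ω ≤ 0 := by
  by_contra! hgt
  obtain ⟨c, hc, hgc, hafter⟩ := exists_last_nonpos
    ((continuousOn_rate hqc hlam).mono fun u hu => hs.trans hu.1) hst hgs
  have hct : c < t := hc.2.lt_of_ne (by rintro rfl; linarith)
  have hc0 : 0 ≤ c := hs.trans hc.1
  have hlam_le : lam c ≤ lam t :=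
    monotoneOn_of_rate_nonneg hlam hpos (convex_Icc c t) (fun u hu => hc0.trans hu.1)
      (fun u hu => by rw [interior_Icc] at hu; exact (hafter u ⟨hu.1, hu.2.le⟩).le)
      (left_mem_Icc.2 hct.le) (right_mem_Icc.2 hct.le) hct.le
  have hq_lt : q t < q c := hq hc0 (hc0.trans hct.le) hct
  have hz : lam t < z₀ := hlt t (hs.trans hst)
  have hqt : 0 < q t := by
    by_contra! hqt
    nlinarith
  nlinarith

theorem le_of_antitoneOn_of_monotoneOn (hq : StrictAntiOn q (Ici 0))
    (hlam : ∀ t, 0 ≤ t → HasDerivAt lam ((q t * (z₀ - lam t) - ω) * lam t) t)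
    (hpos : ∀ t, 0 ≤ t → 0 < lam t) (hlt : ∀ t, 0 ≤ t → lam t < z₀) {p p' : ℝ} (hp : 0 ≤ p)
    (hanti : AntitoneOn lam (Ici p)) (hmono : MonotoneOn lam (Icc 0 p')) : p' ≤ p := by
  by_contra! hpp'
  have hconst : ∀ t ∈ Icc p p', lam t = lam p := fun t ht =>
    le_antisymm (hanti self_mem_Ici ht.1 ht.1) (hmono ⟨hp, hpp'.le⟩ ⟨hp.trans ht.1, ht.2⟩ ht.1)
  have hrate : ∀ t ∈ Ioo p p', q t * (z₀ - lam p) = ω := by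
    intro t ht
    have hderiv0 : HasDerivAt lam 0 t := (hasDerivAt_const t (lam p)).congr_of_eventuallyEq <|
      eventually_of_mem (Ioo_mem_nhds ht.1 ht.2) fun s hs => hconst s (Ioo_subset_Icc_self hs)
    have := (hlam t (hp.trans ht.1.le)).unique hderiv0
    rw [hconst t (Ioo_subset_Icc_self ht)] at this
    linarith [(mul_eq_zero.1 this).resolve_right (hpos p hp).ne']
  obtain ⟨t₁, hpt₁, ht₁p'⟩ := exists_between hpp'
  obtain ⟨t₂, ht₁t₂, ht₂p'⟩ := exists_between ht₁p'
  have hq_eq : q t₁ = q t₂ := mul_right_cancel₀ (sub_pos.2 (hlt p hp)).ne'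
    ((hrate t₁ ⟨hpt₁, ht₁p'⟩).trans (hrate t₂ ⟨hpt₁.trans ht₁t₂, ht₂p'⟩).symm)
  exact (hq (hp.trans hpt₁.le) (hp.trans (hpt₁.trans ht₁t₂).le) ht₁t₂).ne hq_eq.symm

theorem existsUnique_peak (hω : 0 ≤ ω) (hq : StrictAntiOn q (Ici 0))
    (hqc : ContinuousOn q (Ici 0))
    (hlam : ∀ t, 0 ≤ t → HasDerivAt lam ((q t * (z₀ - lam t) - ω) * lam t) t)
    (hpos : ∀ t, 0 ≤ t → 0 < lam t) (hlt : ∀ t, 0 ≤ t → lam t < z₀)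
    (hcross : ∃ t, 0 ≤ t ∧ q t * (z₀ - lam t) - ω ≤ 0) :
    ∃! th : ℝ, 0 ≤ th ∧ MonotoneOn lam (Icc 0 th) ∧ AntitoneOn lam (Ici th) := by
  obtain ⟨t, ht, hgt⟩ := hcross
  obtain ⟨th, hth, hgth, hbefore⟩ :=
    exists_first_nonpos ((continuousOn_rate hqc hlam).mono Icc_subset_Ici_self) ht hgt
  have hpeak : MonotoneOn lam (Icc 0 th) ∧ AntitoneOn lam (Ici th) := by
    constructor
    · refine monotoneOn_of_rate_nonneg hlam hpos (convex_Icc 0 th) Icc_subset_Ici_self ?_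
      intro s hs
      rw [interior_Icc] at hs
      exact (hbefore s ⟨hs.1.le, hs.2⟩).le
    · refine antitoneOn_of_rate_nonpos hlam hpos (convex_Ici th) (Ici_subset_Ici.2 hth.1) ?_
      intro s hs
      rw [interior_Ici] at hs
      exact rate_nonpos_of_le hω hq hqc hlam hpos hlt hth.1 hs.le hgth
  refine ⟨th, ⟨hth.1, hpeak⟩, fun th' ⟨hth', hmono', hanti'⟩ => le_antisymm ?_ ?_⟩
  · exact le_of_antitoneOn_of_monotoneOn hq hlam hpos hlt hth.1 hpeak.2 hmono'
  · exact le_of_antitoneOn_of_monotoneOn hq hlam hpos hlt hth' hanti' hpeak.1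

end PerCapitaRate

theorem exists_rate_nonpos {ω z₀ : ℝ} {r h lam alp : ℝ → ℝ} (hω : 0 ≤ ω) (hrc : Continuous r)
    (hlow : z₀ * r 0 < ω) (hh : ∀ z, 0 < h z) (hhc : Continuous h)
    (hlam : ∀ t, 0 ≤ t → HasDerivAt lam ((r (alp t) * (z₀ - lam t) - ω) * lam t) t)
    (hpos : ∀ t, 0 ≤ t → 0 < lam t) (hlt : ∀ t, 0 ≤ t → lam t < z₀)
    (halp : ∀ t, 0 ≤ t → HasDerivAt alp (-h (lam t) * alp t) t)
    (halp_pos : ∀ t, 0 ≤ t → 0 < alp t) :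
    ∃ t, 0 ≤ t ∧ r (alp t) * (z₀ - lam t) - ω ≤ 0 := by
  by_contra! hrate
  have hmono : MonotoneOn lam (Ici 0) :=
    monotoneOn_of_rate_nonneg hlam hpos (convex_Ici 0) subset_rfl
      fun t ht => (hrate t (interior_subset ht)).le
  obtain ⟨z, -, hz⟩ := isCompact_Icc.exists_isMinOn
    (nonempty_Icc.2 (hlt 0 le_rfl).le) hhc.continuousOn
  have hdecay : Tendsto alp atTop (𝓝 0) := tendsto_zero_of_hasDerivAt_neg_mul (hh z)
    (fun t ht => hz ⟨hmono self_mem_Ici ht ht, (hlt t ht).le⟩) halp halp_pos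
  obtain ⟨t, hrt, ht⟩ := ((((hrc.tendsto 0).comp hdecay).const_mul z₀).eventually_lt_const
    hlow).and (eventually_ge_atTop 0) |>.exists
  have := hrate t ht
  have := hpos t ht
  have := hlt t ht
  simp only [Function.comp_apply] at hrt
  rcases le_or_gt 0 (r (alp t)) with hr0 | hr0 <;> nlinarith

theorem riot_single_peak_general
    (ω z₀ : ℝ) (r h : ℝ → ℝ) (lam alp : ℝ → ℝ)
    (hω : 0 < ω)
    (hrmono : StrictMono r) (hrcont : Continuous r)
    (hlow : z₀ * r 0 < ω)
    (hh : ∀ z, 0 < h z) (hhcont : Continuous h)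
    (hlam0 : lam 0 ∈ Set.Ioo 0 z₀) (halp0pos : 0 < alp 0)
    (hlamode : ∀ t, 0 ≤ t →
      HasDerivAt lam (-ω * lam t + r (alp t) * (lam t * (z₀ - lam t))) t)
    (halpode : ∀ t, 0 ≤ t →
      HasDerivAt alp (-(h (lam t)) * alp t) t) :
    StrictAntiOn alp (Set.Ici 0) ∧
    ∃! th : ℝ, 0 ≤ th ∧ MonotoneOn lam (Set.Icc 0 th) ∧
      AntitoneOn lam (Set.Ici th) := by
  have hlam : ∀ t, 0 ≤ t → HasDerivAt lam ((r (alp t) * (z₀ - lam t) - ω) * lam t) t :=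
    fun t ht => (hlamode t ht).congr_deriv (by ring)
  have hlamc : ContinuousOn lam (Ici 0) := fun t ht => (hlam t ht).continuousAt.continuousWithinAt
  have halpc : ContinuousOn alp (Ici 0) := fun t ht =>
    (halpode t ht).continuousAt.continuousWithinAt
  have hqc : ContinuousOn (fun t => r (alp t)) (Ici 0) := hrcont.comp_continuousOn halpc
  have hlam_mem : ∀ t, 0 ≤ t → lam t ∈ Ioo 0 z₀ := fun t ht =>
    mem_Ioo_of_hasDerivAt_rate hω.le hqc hlam hlam0 ht
  have halp_pos : ∀ t, 0 ≤ t → 0 < alp t := fun t ht =>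
    pos_of_hasDerivAt_mul_add (b := 0) (hhcont.comp_continuousOn hlamc).neg (fun _ _ => le_rfl)
      halp0pos (fun t ht => by simpa using halpode t ht) ht
  have halp_anti : StrictAntiOn alp (Ici 0) :=
    strictAntiOn_of_hasDerivWithinAt_neg (convex_Ici 0) halpc
      (fun t ht => (halpode t (interior_subset ht)).hasDerivWithinAt)
      (fun t ht => mul_neg_of_neg_of_pos (neg_neg_of_pos (hh _)) (halp_pos t (interior_subset ht)))
  refine ⟨halp_anti, existsUnique_peak hω.le (hrmono.comp_strictAntiOn halp_anti) hqc hlam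
    (fun t ht => (hlam_mem t ht).1) (fun t ht => (hlam_mem t ht).2) ?_⟩
  exact exists_rate_nonpos (r := r) hω.le hrcont hlow hh hhcont hlam (fun t ht => (hlam_mem t ht).1)
    (fun t ht => (hlam_mem t ht).2) halpode halp_pos

/-- monotone decrease of the tension forces a single activity peak.
`α` is strictly decreasing, and there is a unique `t̂ ≥ 0` such that `λ` is
nondecreasing on `[0, t̂]` and nonincreasing on `[t̂, ∞)`. -/
theorem riot_single_peak
    (ω z₀ αc : ℝ) (r h : ℝ → ℝ) (lam alp : ℝ → ℝ)
    (hω : 0 < ω) (hz₀ : 0 < z₀)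
    (hrmono : StrictMono r) (hrcont : Continuous r)
    (hlow : z₀ * r 0 < ω) (hhigh : ω < z₀)
    (hαc : r αc = ω / z₀)
    (hh : ∀ z, 0 < h z) (hhcont : Continuous h)
    (hlam0 : lam 0 ∈ Set.Ioo 0 z₀) (halp0 : αc < alp 0) (halp0pos : 0 < alp 0)
    (hlamode : ∀ t, 0 ≤ t →
      HasDerivAt lam (-ω * lam t + r (alp t) * (lam t * (z₀ - lam t))) t)
    (halpode : ∀ t, 0 ≤ t →
      HasDerivAt alp (-(h (lam t)) * alp t) t) :
    StrictAntiOn alp (Set.Ici 0) ∧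
    ∃! th : ℝ, 0 ≤ th ∧ MonotoneOn lam (Set.Icc 0 th) ∧
      AntitoneOn lam (Set.Ici th) :=
  riot_single_peak_general ω z₀ r h lam alp hω hrmono hrcont hlow hh hhcont hlam0 halp0pos hlamode
    halpode
end

section
/- (Invariant region.) For the planar system λ' = -ω(λ-λ_b) + r(α)λ(z₀-λ), α' = θα_b - h(λ)α, with ω, θ > 0, 0 ≤ λ_b < z₀, α_b ≥ 0, r : ℝ → (0,1), h : ℝ → (0, θ], the rectangle R = [0, z₀] × [0, M] with M := θα_b / inf_{λ∈[0,z₀]} h(λ) (augmented so that M ≥ α(0)) is forward invariant: if (λ(0), α(0)) ∈ R then (λ(t), α(t)) ∈ R for all t ≥ 0. -/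
open Real Set

/-!
Each of the four sides of the rectangle is a one-sided barrier: writing the distance past a side
as `f` (e.g. `f = λ - z₀` or `f = -α`), the equations give `f' ≤ K f` whenever `0 < f ≤ 1`
(for `α ≤ M` this uses that `λ` is already known to stay in `[0, z₀]`). Since at the sides
`λ = 0` and `α = 0` the field may be tangent (`λ_b = 0`, `α_b = 0`), a bare contact argument
does not suffice; instead `f` is compared with the strict fence `ε e^{(|K|+1)(t - b)}` and
`ε → 0`.
-/

theorem nonpos_of_deriv_right_le_mul {f f' : ℝ → ℝ} {a b K ρ : ℝ} (hρ : 0 < ρ)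
    (hf : ContinuousOn f (Icc a b))
    (hf' : ∀ x ∈ Ico a b, HasDerivWithinAt f (f' x) (Ici x) x) (ha : f a ≤ 0)
    (bound : ∀ x ∈ Ico a b, 0 < f x → f x ≤ ρ → f' x ≤ K * f x) :
    ∀ ⦃x⦄, x ∈ Icc a b → f x ≤ 0 := by
  intro x hx
  refine le_of_forall_pos_le_add fun δ hδ => ?_
  set L := |K| + 1
  set ε := min δ ρ
  have hε : 0 < ε := lt_min hδ hρ
  have hB_le : ∀ t ≤ b, ε * exp (L * (t - b)) ≤ ε := fun _ ht =>
    mul_le_of_le_one_right hε.le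
      (exp_le_one_iff.2 (mul_nonpos_of_nonneg_of_nonpos (by positivity) (by linarith)))
  have hB : ∀ t, HasDerivAt (fun t => ε * exp (L * (t - b))) (ε * exp (L * (t - b)) * L) t := by
    intro t
    have := (((hasDerivAt_id t).sub_const b).const_mul L).exp.const_mul ε
    simpa [mul_assoc] using this
  have fence := image_le_of_deriv_right_lt_deriv_boundary hf hf' (ha.trans (by positivity)) hB
    (fun t ht hft => by
      have hpos : 0 < ε * exp (L * (t - b)) := by positivity
      calc f' t ≤ K * f t :=
            bound t ht (hft ▸ hpos) (hft ▸ (hB_le t ht.2.le).trans (min_le_right _ _))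
        _ ≤ |K| * f t := mul_le_mul_of_nonneg_right (le_abs_self K) (hft ▸ hpos.le)
        _ < ε * exp (L * (t - b)) * L := by rw [hft]; nlinarith) hx
  linarith [hB_le x hx.2, min_le_left δ ρ]

theorem nonpos_of_hasDerivAt_le_mul {f f' : ℝ → ℝ} {a K ρ : ℝ} (hρ : 0 < ρ)
    (hf : ∀ t, a ≤ t → HasDerivAt f (f' t) t) (ha : f a ≤ 0)
    (bound : ∀ t, a ≤ t → 0 < f t → f t ≤ ρ → f' t ≤ K * f t) :
    ∀ t, a ≤ t → f t ≤ 0 := fun _ ht =>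
  nonpos_of_deriv_right_le_mul hρ (fun x hx => (hf x hx.1).continuousAt.continuousWithinAt)
    (fun x hx => (hf x hx.1).hasDerivWithinAt) ha (fun x hx => bound x hx.1) ⟨ht, le_rfl⟩

theorem riot_invariant_region_general
    (ω θ z₀ lamb αb M : ℝ) (r h : ℝ → ℝ) (lam alp : ℝ → ℝ)
    (hω : 0 < ω) (hθ : 0 < θ) (hlamb : 0 ≤ lamb) (hlambz : lamb < z₀)
    (hαb : 0 ≤ αb)
    (hr : ∀ z, 0 < r z ∧ r z < 1)
    (hh : ∀ z, 0 < h z ∧ h z ≤ θ)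
    (hM : ∀ l ∈ Set.Icc (0:ℝ) z₀, θ * αb ≤ h l * M)
    (hlamode : ∀ t, 0 ≤ t →
      HasDerivAt lam (-ω * (lam t - lamb) + r (alp t) * (lam t * (z₀ - lam t))) t)
    (halpode : ∀ t, 0 ≤ t →
      HasDerivAt alp (θ * αb - h (lam t) * alp t) t)
    (hinit : lam 0 ∈ Set.Icc 0 z₀ ∧ alp 0 ∈ Set.Icc 0 M) :
    ∀ t, 0 ≤ t → lam t ∈ Set.Icc 0 z₀ ∧ alp t ∈ Set.Icc 0 M := by
  obtain ⟨⟨hlam₀, hlamz₀⟩, halp₀, halpM⟩ := hinit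
  have lam_le : ∀ t, 0 ≤ t → lam t - z₀ ≤ 0 :=
    nonpos_of_hasDerivAt_le_mul (K := 0) one_pos (fun t ht => (hlamode t ht).sub_const z₀)
      (by linarith) (fun t _ hpos _ => by
        nlinarith [mul_pos hω (by linarith : 0 < lam t - lamb),
          mul_pos (hr (alp t)).1 (mul_pos (by linarith : 0 < lam t) hpos)])
  -- for `-1 ≤ λ < 0` the logistic term is at least `(z₀ + 1) λ`
  have lam_nonneg : ∀ t, 0 ≤ t → -lam t ≤ 0 :=
    nonpos_of_hasDerivAt_le_mul (K := z₀ + 1) one_pos (fun t ht => (hlamode t ht).neg)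
      (by linarith) (fun t _ hpos hle => by
        nlinarith [mul_nonneg hω.le (by linarith : 0 ≤ lamb - lam t),
          mul_nonneg (sub_nonneg.2 (hr (alp t)).2.le)
            (mul_nonneg hpos.le (by linarith : 0 ≤ z₀ - lam t)),
          mul_nonneg hpos.le (sub_nonneg.2 hle)])
  have alp_nonneg : ∀ t, 0 ≤ t → -alp t ≤ 0 :=
    nonpos_of_hasDerivAt_le_mul (K := 0) one_pos (fun t ht => (halpode t ht).neg)
      (by linarith) (fun t _ hpos _ => by nlinarith [(hh (lam t)).1])
  have alp_le : ∀ t, 0 ≤ t → alp t - M ≤ 0 :=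
    nonpos_of_hasDerivAt_le_mul (K := 0) one_pos (fun t ht => (halpode t ht).sub_const M)
      (by linarith) (fun t ht hpos _ => by
        nlinarith [(hh (lam t)).1,
          hM (lam t) ⟨by linarith [lam_nonneg t ht], by linarith [lam_le t ht]⟩])
  exact fun t ht => ⟨⟨by linarith [lam_nonneg t ht], by linarith [lam_le t ht]⟩,
    by linarith [alp_nonneg t ht], by linarith [alp_le t ht]⟩

/-- the rectangle `[0, z₀] × [0, M]` is forward invariant for the
planar system `λ' = -ω(λ-λ_b) + r(α) λ (z₀-λ)`, `α' = θα_b - h(λ)α`, provided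
`M ≥ α(0)` and `h(λ) M ≥ θ α_b` on `[0, z₀]`. -/
theorem riot_invariant_region
    (ω θ z₀ lamb αb M : ℝ) (r h : ℝ → ℝ) (lam alp : ℝ → ℝ)
    (hω : 0 < ω) (hθ : 0 < θ) (hlamb : 0 ≤ lamb) (hlambz : lamb < z₀)
    (hαb : 0 ≤ αb)
    (hr : ∀ z, 0 < r z ∧ r z < 1)
    (hh : ∀ z, 0 < h z ∧ h z ≤ θ)
    (hM0 : alp 0 ≤ M)
    (hM : ∀ l ∈ Set.Icc (0:ℝ) z₀, θ * αb ≤ h l * M)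
    (hlamode : ∀ t, 0 ≤ t →
      HasDerivAt lam (-ω * (lam t - lamb) + r (alp t) * (lam t * (z₀ - lam t))) t)
    (halpode : ∀ t, 0 ≤ t →
      HasDerivAt alp (θ * αb - h (lam t) * alp t) t)
    (hinit : lam 0 ∈ Set.Icc 0 z₀ ∧ alp 0 ∈ Set.Icc 0 M) :
    ∀ t, 0 ≤ t → lam t ∈ Set.Icc 0 z₀ ∧ alp t ∈ Set.Icc 0 M :=
  riot_invariant_region_general ω θ z₀ lamb αb M r h lam alp hω hθ hlamb hlambz hαb hr hh hM hlamode
    halpode hinit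
end
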